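/- arXiv:2103.01012 — 4 statements merged into one kernel-verified Lean document; each statement's English description precedes it below -/
import Mathlib

section
/- If a shift space X is unambiguously coded by C (i.e., C is a strong code and the language of X equals the set of factors of C*), then C is a circular code. -/
variable {A : Type*}

/-- `C*`: `w` is a concatenation of words of `C`. -/
def InStar (C : Set (List A)) (w : List A) : Prop :=
  ∃ l : List (List A), (∀ u ∈ l, u ∈ C) ∧ l.flatten = w

/-- The word read in `x` at positions `i, i+1, …, i+l-1`. -/
def window (x : ℤ → A) (i : ℤ) (l : ℕ) : List A :=
  List.ofFn (fun j : Fin l => x (i + (j : ℕ)))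

/-- The language of a set of bi-infinite sequences: its finite factors. -/
def Lang (X : Set (ℤ → A)) : Set (List A) :=
  {w | ∃ x ∈ X, ∃ i : ℤ, w = window x i w.length}

/-- The set of factors of words of `C*`. -/
def FacStar (C : Set (List A)) : Set (List A) :=
  {w | ∃ z : List A, InStar C z ∧ w <:+: z}

/-- The shift map on bi-infinite sequences. -/
def shift (x : ℤ → A) : ℤ → A := fun n => x (n + 1)

/-- A factorization (with phase `k`) of the bi-infinite sequence `x` into words
of `C`. -/
def IsBiFactorization (C : Set (List A)) (x : ℤ → A)
    (c : ℤ → List A) (k : ℕ) : Prop :=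
  (∀ n, c n ∈ C) ∧ k < (c 0).length ∧
  ∃ p : ℤ → ℤ, p 0 = -(k : ℤ) ∧ (∀ n, p (n + 1) = p n + (c n).length) ∧
    ∀ (n : ℤ) (i : Fin (c n).length), x (p n + (i : ℕ)) = (c n).get i

/-! The periodic point `x = ⋯ (u ++ v) (u ++ v) ⋯` lies in `X`: it is a limit of points of `X`,
since each of its factors is a factor of a power of `u ++ v ∈ C*`. Factorizations of `u ++ v`
and of `v ++ u` into words of `C` repeat to two factorizations of `x`, the second one with a cut
at position `u.length`. By unambiguity they have the same cuts, so `u.length` is a cut of the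
factorization of `u ++ v`, which therefore splits into factorizations of `u` and of `v`. -/

/-- `IsBiFactorization` with the phase forgotten: the word `c n` is read in `x` from position
`p n` on. -/
def IsCover (C : Set (List A)) (x : ℤ → A) (c : ℤ → List A) (p : ℤ → ℤ) : Prop :=
  (∀ n, c n ∈ C) ∧ (∀ n, p (n + 1) = p n + (c n).length) ∧
    ∀ (n : ℤ) (i : Fin (c n).length), x (p n + (i : ℕ)) = (c n).get i

namespace IsCover

variable {C : Set (List A)} {x : ℤ → A} {c : ℤ → List A} {p : ℤ → ℤ}

lemma comp_add_right (h : IsCover C x c p) (m : ℤ) :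
    IsCover C x (fun n => c (n + m)) (fun n => p (n + m)) := by
  obtain ⟨hC, hp, hx⟩ := h
  exact ⟨fun n => hC _, fun n => by simp only; rw [add_right_comm, hp], fun n => hx _⟩

lemma translate (h : IsCover C x c p) (s : ℤ) :
    IsCover C (fun n => x (n - s)) c (fun n => p n + s) := by
  obtain ⟨hC, hp, hx⟩ := h
  refine ⟨hC, fun n => by simp only; rw [hp]; ring, fun n i => ?_⟩
  simp only [← hx n i]
  ring_nf

lemma positions_eq {y : ℤ → A} {q : ℤ → ℤ} (h : IsCover C x c p) (h' : IsCover C y c q)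
    (h0 : p 0 = q 0) : p = q := by
  funext n
  induction n using Int.induction_on with
  | zero => exact h0
  | succ n ih => rw [h.2.1, h'.2.1, ih]
  | pred n ih =>
    have hp := h.2.1 (-n - 1)
    have hq := h'.2.1 (-n - 1)
    rw [sub_add_cancel] at hp hq
    omega

lemma exists_phase (h : IsCover C x c p) (hne : ∀ n, c n ≠ []) :
    ∃ m, p m ≤ 0 ∧ 0 < p (m + 1) := by
  have hstep : ∀ n, p n < p (n + 1) := fun n => by
    rw [h.2.1]; simpa [List.length_pos_iff] using hne n
  have hgrowth : ∀ k : ℕ, p 0 + k ≤ p k ∧ p (-k) ≤ p 0 - k := by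
    intro k
    induction k with
    | zero => simp
    | succ k ih =>
      have h₁ := hstep k
      have h₂ := hstep (-(k + 1 : ℕ))
      push_cast at h₁ h₂ ⊢
      rw [show -((k : ℤ) + 1) + 1 = -k by ring] at h₂
      omega
  obtain ⟨m, hm, hmax⟩ := Int.exists_greatest_of_bdd (P := fun m => p m ≤ 0)
    ⟨(p 0).natAbs, fun z hz => by
      obtain ⟨k, rfl | rfl⟩ := Int.eq_nat_or_neg z
      · have := (hgrowth k).1; omega
      · omega⟩
    ⟨-(p 0).natAbs, by have := (hgrowth (p 0).natAbs).2; omega⟩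
  exact ⟨m, hm, not_le.1 fun h1 => by have := hmax _ h1; omega⟩

lemma isBiFactorization (h : IsCover C x c p) (h0 : p 0 ≤ 0) (h1 : 0 < p 1) :
    IsBiFactorization C x c (-p 0).toNat := by
  obtain ⟨hC, hp, hx⟩ := h
  refine ⟨hC, ?_, p, by omega, hp, hx⟩
  have := hp 0
  rw [zero_add] at this
  omega

lemma exists_eq_of_unambiguous
    (huniq : ∀ (c c' : ℤ → List A) (k k' : ℕ),
      IsBiFactorization C x c k → IsBiFactorization C x c' k' → c = c' ∧ k = k')
    (hne : ∀ w ∈ C, w ≠ []) {c' : ℤ → List A} {p' : ℤ → ℤ}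
    (h : IsCover C x c p) (h' : IsCover C x c' p') (n : ℤ) : ∃ n', p n' = p' n := by
  obtain ⟨m, hm⟩ := h.exists_phase fun n => hne _ (h.1 n)
  obtain ⟨m', hm'⟩ := h'.exists_phase fun n => hne _ (h'.1 n)
  have hf := (h.comp_add_right m).isBiFactorization (by simpa using hm.1)
    (by simpa [add_comm] using hm.2)
  have hf' := (h'.comp_add_right m').isBiFactorization (by simpa using hm'.1)
    (by simpa [add_comm] using hm'.2)
  obtain ⟨hc, hk⟩ := huniq _ _ _ _ hf hf'
  have hpos := (h.comp_add_right m).positions_eq (hc ▸ h'.comp_add_right m')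
    (by simp only [zero_add] at hk ⊢; omega)
  exact ⟨n - m' + m, by simpa using congrFun hpos (n - m')⟩

end IsCover

section ShiftSpace

variable {X : Set (ℤ → A)}

lemma translate_mem (hXinv : shift '' X = X) {y : ℤ → A} (hy : y ∈ X) (t : ℤ) :
    (fun n => y (n + t)) ∈ X := by
  induction t using Int.induction_on with
  | zero => simpa using hy
  | succ t ih =>
    have : shift (fun n => y (n + t)) ∈ X := hXinv ▸ Set.mem_image_of_mem shift ih
    convert this using 1
    funext n
    simp only [shift]
    ring_nf
  | pred t ih =>
    obtain ⟨z, hz, hzy⟩ := hXinv.symm ▸ ih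
    convert hz using 1
    funext n
    have := congrFun hzy (n - 1)
    simp only [shift, sub_add_cancel] at this
    rw [this]
    ring_nf

lemma mem_of_forall_window_mem_lang [TopologicalSpace A] [DiscreteTopology A]
    (hXcl : IsClosed X) (hXinv : shift '' X = X) {x : ℤ → A}
    (h : ∀ i l, window x i l ∈ Lang X) : x ∈ X := by
  have hcentral : ∀ n : ℕ, ∃ y ∈ X, ∀ i : ℤ, i.natAbs ≤ n → y i = x i := by
    intro n
    obtain ⟨y, hy, j, hj⟩ := h (-n) (2 * n + 1)
    simp only [window, List.length_ofFn, List.ofFn_inj] at hj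
    refine ⟨fun m => y (m + (j + n)), translate_mem hXinv hy _, fun i hi => ?_⟩
    have := congrFun hj ⟨(i + n).toNat, by omega⟩
    simp only [Fin.val_cast] at this
    rw [show -(n : ℤ) + ((i + n).toNat : ℕ) = i by omega,
      show j + ((i + n).toNat : ℕ) = i + (j + n) by omega] at this
    exact this.symm
  choose z hzX hzx using hcentral
  refine hXcl.mem_of_tendsto (b := Filter.atTop) (tendsto_pi_nhds.2 fun i => ?_)
    (Filter.Eventually.of_forall hzX)
  rw [nhds_discrete, Filter.tendsto_pure]
  filter_upwards [Filter.eventually_ge_atTop i.natAbs] with n hn using hzx n i hn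

end ShiftSpace

section PeriodicPoint

lemma toNat_emod_lt (n : ℤ) {m : ℕ} (hm : 0 < m) : (n % m).toNat < m := by
  have := Int.emod_lt_of_pos n (Int.natCast_pos.2 hm)
  have := Int.emod_nonneg n (Int.natCast_ne_zero.2 hm.ne')
  omega

lemma exists_natCast_add_mul (n : ℤ) {m : ℕ} (hm : 0 < m) :
    ∃ (t : ℕ) (q : ℤ), t < m ∧ n = t + q * m :=
  ⟨(n % m).toNat, n / m, toNat_emod_lt n hm, by
    rw [Int.toNat_of_nonneg (Int.emod_nonneg n (Int.natCast_ne_zero.2 hm.ne'))]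
    linarith [Int.emod_add_mul_ediv n m]⟩

def periodicPoint (w : List A) (hw : w ≠ []) (n : ℤ) : A :=
  w[(n % w.length).toNat]'(toNat_emod_lt n (List.length_pos_iff.2 hw))

variable {w : List A} (hw : w ≠ [])

lemma periodicPoint_natCast_add_mul (t : ℕ) (q : ℤ) :
    periodicPoint w hw (t + q * w.length) =
      w[t % w.length]'(Nat.mod_lt _ (List.length_pos_iff.2 hw)) := by
  simp only [periodicPoint, Int.add_mul_emod_self_right, ← Int.natCast_mod, Int.toNat_natCast]

lemma periodicPoint_natCast_add_mul_of_lt {t : ℕ} (ht : t < w.length) (q : ℤ) :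
    periodicPoint w hw (t + q * w.length) = w[t] := by
  simp only [periodicPoint_natCast_add_mul, Nat.mod_eq_of_lt ht]

lemma periodicPoint_rotate {w' : List A} (hw' : w' ≠ []) {k : ℕ} (hk : w.rotate k = w')
    (n : ℤ) : periodicPoint w' hw' n = periodicPoint w hw (n + k) := by
  subst hk
  have hlen : (w.rotate k).length = w.length := List.length_rotate w k
  obtain ⟨t, q, ht, rfl⟩ := exists_natCast_add_mul n (List.length_pos_iff.2 hw')
  rw [show (t : ℤ) + q * (w.rotate k).length + k = ((t + k : ℕ) : ℤ) + q * w.length by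
    push_cast [hlen]; ring]
  simp only [periodicPoint_natCast_add_mul_of_lt hw' ht, periodicPoint_natCast_add_mul,
    List.getElem_rotate]

lemma getElem?_flatten_replicate (M : ℕ) {n : ℕ} (hn : n < M * w.length) :
    (List.replicate M w).flatten[n]? =
      some (w[n % w.length]'(Nat.mod_lt _ (List.length_pos_iff.2 hw))) := by
  induction M generalizing n with
  | zero => simp at hn
  | succ M ih =>
    rw [List.replicate_succ, List.flatten_cons]
    by_cases hnw : n < w.length
    · rw [List.getElem?_append_left hnw, List.getElem?_eq_getElem hnw]
      simp only [Nat.mod_eq_of_lt hnw]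
    · rw [List.getElem?_append_right (by omega), ih (by rw [add_mul, one_mul] at hn; omega)]
      simp only [← Nat.mod_eq_sub_mod (by omega : w.length ≤ n)]

lemma window_periodicPoint_infix (i : ℤ) (l : ℕ) :
    ∃ M, window (periodicPoint w hw) i l <:+: (List.replicate M w).flatten := by
  have hm := List.length_pos_iff.2 hw
  obtain ⟨r, q, -, rfl⟩ := exists_natCast_add_mul i hm
  have hlen : r + l ≤ (r + l) * w.length := Nat.le_mul_of_pos_right _ hm
  refine ⟨r + l, List.infix_iff_getElem?.2 ⟨r, ?_, fun j hj => ?_⟩⟩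
  · simpa [window, add_comm] using hlen
  · simp only [window, List.length_ofFn] at hj
    simp only [window, List.getElem_ofFn]
    rw [getElem?_flatten_replicate hw _ (by omega),
      show (r : ℤ) + q * w.length + (j : ℕ) = ((j + r : ℕ) : ℤ) + q * w.length by
        push_cast; ring,
      periodicPoint_natCast_add_mul]

lemma InStar.flatten_replicate {C : Set (List A)} (h : InStar C w) (M : ℕ) :
    InStar C (List.replicate M w).flatten := by
  obtain ⟨L, hL, rfl⟩ := h
  refine ⟨(List.replicate M L).flatten, fun u hu => ?_, by
    rw [List.flatten_flatten, List.map_replicate]⟩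
  obtain ⟨_, hL', hu⟩ := List.mem_flatten.1 hu
  exact hL u (List.eq_of_mem_replicate hL' ▸ hu)

lemma periodicPoint_mem [TopologicalSpace A] [DiscreteTopology A] {X : Set (ℤ → A)}
    (hXcl : IsClosed X) (hXinv : shift '' X = X) {C : Set (List A)} (hC : FacStar C ⊆ Lang X)
    (hwC : InStar C w) : periodicPoint w hw ∈ X :=
  mem_of_forall_window_mem_lang hXcl hXinv fun i l =>
    let ⟨M, hM⟩ := window_periodicPoint_infix hw i l
    hC ⟨_, hwC.flatten_replicate M, hM⟩

end PeriodicPoint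

section PeriodicCover

variable {L : List (List A)}

lemma flatten_eq_take_append_getElem {r : ℕ} (hr : r < L.length) :
    L.flatten = (L.take r).flatten ++ L[r] ++ (L.drop (r + 1)).flatten := by
  calc L.flatten = (L.take r ++ L[r] :: L.drop (r + 1)).flatten := by
        rw [← List.drop_eq_getElem_cons hr, List.take_append_drop]
    _ = _ := by simp only [List.flatten_append, List.flatten_cons, List.append_assoc]

lemma getElem?_flatten_length_take_add {r i : ℕ} (hr : r < L.length) (hi : i < L[r].length) :
    L.flatten[(L.take r).flatten.length + i]? = some L[r][i] := by
  rw [flatten_eq_take_append_getElem hr, List.append_assoc,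
    List.getElem?_append_right (Nat.le_add_right _ _), Nat.add_sub_cancel_left,
    List.getElem?_append_left hi, List.getElem?_eq_getElem hi]

lemma length_flatten_take_succ {r : ℕ} (hr : r < L.length) :
    (L.take (r + 1)).flatten.length = (L.take r).flatten.length + L[r].length := by
  simp only [List.take_add_one, List.getElem?_eq_getElem hr, Option.toList_some,
    List.flatten_append, List.flatten_cons, List.flatten_nil, List.append_nil, List.length_append]

lemma length_flatten_take_le (r : ℕ) : (L.take r).flatten.length ≤ L.flatten.length := by
  have := congrArg (fun l => l.flatten.length) (List.take_append_drop r L)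
  simp only [List.flatten_append, List.length_append] at this
  omega

/-- Where the `n`-th word of `⋯ L L L ⋯` starts in `⋯ w w w ⋯`, for `w = L.flatten`. -/
def periodicCutPoint (L : List (List A)) (n : ℤ) : ℤ :=
  n / L.length * L.flatten.length + (L.take (n % L.length).toNat).flatten.length

lemma periodicCutPoint_natCast_add_mul {r : ℕ} (hr : r < L.length) (q : ℤ) :
    periodicCutPoint L (r + q * L.length) =
      (L.take r).flatten.length + q * L.flatten.length := by
  have hL : (0 : ℤ) < L.length := by omega
  have hdiv : ((r : ℤ) + q * L.length) / L.length = q := by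
    rw [Int.add_mul_ediv_right _ _ hL.ne', Int.ediv_eq_zero_of_lt (by omega) (by omega), zero_add]
  have hmod : ((r : ℤ) + q * L.length) % L.length = r := by
    rw [Int.add_mul_emod_self_right, Int.emod_eq_of_lt (by omega) (by omega)]
  rw [periodicCutPoint, hdiv, hmod, Int.toNat_natCast, add_comm]

lemma periodicCutPoint_succ (hL : L ≠ []) (n : ℤ) :
    periodicCutPoint L (n + 1) = periodicCutPoint L n + (periodicPoint L hL n).length := by
  obtain ⟨r, q, hr, rfl⟩ := exists_natCast_add_mul n (List.length_pos_iff.2 hL)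
  rw [periodicPoint_natCast_add_mul_of_lt hL hr, periodicCutPoint_natCast_add_mul hr]
  rcases Nat.lt_or_ge (r + 1) L.length with hr1 | hr1
  · rw [show (r : ℤ) + q * L.length + 1 = ((r + 1 : ℕ) : ℤ) + q * L.length by
        push_cast; ring,
      periodicCutPoint_natCast_add_mul hr1, length_flatten_take_succ hr]
    push_cast
    ring
  · have hlast : (L.take r).flatten.length + L[r].length = L.flatten.length := by
      rw [← length_flatten_take_succ hr, show r + 1 = L.length by omega, List.take_length]
    have hrlen : (L.length : ℤ) = r + 1 := by omega
    rw [show (r : ℤ) + q * L.length + 1 = ((0 : ℕ) : ℤ) + (q + 1) * L.length by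
        rw [hrlen]; push_cast; ring,
      periodicCutPoint_natCast_add_mul (List.length_pos_iff.2 hL)]
    have : ((L.take r).flatten.length : ℤ) + L[r].length = L.flatten.length := by
      exact_mod_cast hlast
    simp only [List.take_zero, List.flatten_nil, List.length_nil, Nat.cast_zero]
    linarith

lemma isCover_periodicPoint {C : Set (List A)} (hLC : ∀ u ∈ L, u ∈ C) (hL : L ≠ [])
    {w : List A} (hw : w ≠ []) (hLw : L.flatten = w) :
    IsCover C (periodicPoint w hw) (periodicPoint L hL) (periodicCutPoint L) := by
  subst hLw
  refine ⟨fun n => hLC _ (List.getElem_mem _), periodicCutPoint_succ hL,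
    fun n ⟨i, hi⟩ => ?_⟩
  obtain ⟨r, q, hr, rfl⟩ := exists_natCast_add_mul n (List.length_pos_iff.2 hL)
  have hc := periodicPoint_natCast_add_mul_of_lt hL hr q
  have hi' : i < L[r].length := hc ▸ hi
  have hlt : (L.take r).flatten.length + i < L.flatten.length := by
    have := congrArg List.length (flatten_eq_take_append_getElem hr)
    simp only [List.length_append] at this
    omega
  rw [periodicCutPoint_natCast_add_mul hr, List.get_eq_getElem, List.getElem_of_eq hc,
    show ((L.take r).flatten.length : ℤ) + q * L.flatten.length + i =
      (((L.take r).flatten.length + i : ℕ) : ℤ) + q * L.flatten.length by push_cast; ring,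
    periodicPoint_natCast_add_mul_of_lt _ hlt, List.getElem_eq_iff,
    getElem?_flatten_length_take_add hr hi']

lemma exists_length_flatten_take_eq_of_periodicCutPoint_eq {n : ℤ} {t : ℕ}
    (hn : periodicCutPoint L n = t) (ht0 : 0 < t) (ht : t < L.flatten.length) :
    ∃ r, (L.take r).flatten.length = t := by
  have hL : 0 < L.length := List.length_pos_iff.2 (by rintro rfl; simp at ht)
  obtain ⟨r, q, hr, rfl⟩ := exists_natCast_add_mul n hL
  rw [periodicCutPoint_natCast_add_mul hr] at hn
  have hle := length_flatten_take_le (L := L) r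
  obtain rfl : q = 0 := by
    rcases lt_trichotomy q 0 with hq | hq | hq
    · nlinarith
    · exact hq
    · nlinarith
  exact ⟨r, by simpa only [zero_mul, add_zero, Nat.cast_inj] using hn⟩

lemma InStar.of_flatten_eq_append {C : Set (List A)} (hLC : ∀ a ∈ L, a ∈ C) {u v : List A}
    (huv : L.flatten = u ++ v) {r : ℕ} (hr : (L.take r).flatten.length = u.length) :
    InStar C u ∧ InStar C v := by
  obtain ⟨hu, hv⟩ := List.append_inj
    (by rw [← List.flatten_append, List.take_append_drop, huv]) hr
  exact ⟨⟨L.take r, fun a ha => hLC a (List.mem_of_mem_take ha), hu⟩,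
    ⟨L.drop r, fun a ha => hLC a (List.mem_of_mem_drop ha), hv⟩⟩

end PeriodicCover

theorem stmt4_general [TopologicalSpace A] [DiscreteTopology A]
    (X : Set (ℤ → A)) (hXcl : IsClosed X) (hXinv : shift '' X = X)
    (C : Set (List A)) (hne : ∀ c ∈ C, c ≠ [])
    (hcoded : Lang X = FacStar C)
    (hunamb : ∀ x ∈ X, ∀ (c c' : ℤ → List A) (k k' : ℕ),
      IsBiFactorization C x c k → IsBiFactorization C x c' k' → c = c' ∧ k = k') :
    ∀ u v : List A, InStar C (u ++ v) → InStar C (v ++ u) →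
      InStar C u ∧ InStar C v := by
  rintro u v ⟨L₁, hL₁C, huv⟩ ⟨L₂, hL₂C, hvu⟩
  rcases eq_or_ne u [] with rfl | hu
  · exact ⟨⟨[], by simp, rfl⟩, ⟨L₁, hL₁C, huv⟩⟩
  rcases eq_or_ne v [] with rfl | hv
  · exact ⟨⟨L₂, hL₂C, hvu⟩, ⟨[], by simp, rfl⟩⟩
  have hw : u ++ v ≠ [] := by simp [hu]
  have hw' : v ++ u ≠ [] := by simp [hu]
  have hL₁ : L₁ ≠ [] := by rintro rfl; exact hw huv.symm
  have hL₂ : L₂ ≠ [] := by rintro rfl; exact hw' hvu.symm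
  have hx := periodicPoint_mem hw hXcl hXinv hcoded.ge ⟨L₁, hL₁C, huv⟩
  have h₁ := isCover_periodicPoint hL₁C hL₁ hw huv
  have h₂ : IsCover C (periodicPoint (u ++ v) hw) (periodicPoint L₂ hL₂)
      (fun n => periodicCutPoint L₂ n + u.length) := by
    convert (isCover_periodicPoint hL₂C hL₂ hw' hvu).translate u.length using 1
    funext n
    rw [periodicPoint_rotate hw hw' (List.rotate_append_length_eq u v), sub_add_cancel]
  obtain ⟨n, hn⟩ := h₁.exists_eq_of_unambiguous (hunamb _ hx) hne h₂ 0
  obtain ⟨r, hr⟩ := exists_length_flatten_take_eq_of_periodicCutPoint_eq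
    (by simpa [periodicCutPoint] using hn) (List.length_pos_iff.2 hu)
    (by simp [huv, List.length_pos_iff.2 hv])
  exact InStar.of_flatten_eq_append hL₁C huv hr

/-- if a shift space `X` is unambiguously coded by `C` (the
language of `X` is the set of factors of `C*` and every point of `X` has at
most one factorization into words of `C`), then `C` is a circular code. -/
theorem stmt4 [Fintype A] [TopologicalSpace A] [DiscreteTopology A]
    (X : Set (ℤ → A)) (hXcl : IsClosed X) (hXinv : shift '' X = X)
    (C : Set (List A)) (hne : ∀ c ∈ C, c ≠ [])
    (hcoded : Lang X = FacStar C)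
    (hunamb : ∀ x ∈ X, ∀ (c c' : ℤ → List A) (k k' : ℕ),
      IsBiFactorization C x c k → IsBiFactorization C x c' k' → c = c' ∧ k = k') :
    ∀ u v : List A, InStar C (u ++ v) → InStar C (v ++ u) →
      InStar C u ∧ InStar C v :=
  stmt4_general X hXcl hXinv C hne hcoded hunamb
end

section
/- A factor of a coded shift is a coded shift: if X is a coded shift and φ : X → Y is a surjective sliding block code, then Y is a coded shift. -/
variable {A B : Type*}

/-- The sliding block code with memory `m`, anticipation `n` and block map `f`. -/
def slide (f : List A → B) (m n : ℕ) (x : ℤ → A) : ℤ → B :=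
  fun i => f (window x (i - (m : ℤ)) (m + n + 1))

/-!
The language of `φ(X)` consists of the images `Φ u` of the words `u ∈ L(X)` of length at least
`M = m + n`, where `Φ` slides the block map along `u`. Fix a word `p` of length `M` ending a word
`z ∈ C*`, and call `v ∈ C*` a loop at `p` if `p ++ v` ends in `p` again. Images of loops
concatenate, `Φ(p v) Φ(p v') = Φ(p v v')`, and each `p v` is a factor of `z v ∈ C*`, so the
factors of concatenated images lie in `L(φ(X))`. Conversely a factor `u` of `y ∈ C*` is a factor
of `p y z`, where `y z` is a loop, so `L(φ(X))` is the factor language of `D*` for `D` the set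
of images of loops.
-/

@[simp]
lemma length_window (x : ℤ → A) (i : ℤ) (l : ℕ) : (window x i l).length = l := by
  simp [window]

lemma window_drop_take (x : ℤ → A) (i : ℤ) {l j k : ℕ} (h : j + k ≤ l) :
    ((window x i l).drop j).take k = window x (i + j) k := by
  apply List.ext_getElem (by simp [window]; omega)
  intro t _ _
  simp only [window, List.getElem_take, List.getElem_drop, List.getElem_ofFn]
  congr 1
  push_cast
  ring

lemma window_mem_Lang {X : Set (ℤ → A)} {x : ℤ → A} (hx : x ∈ X) (i : ℤ) (l : ℕ) :
    window x i l ∈ Lang X :=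
  ⟨x, hx, i, by rw [length_window]⟩

lemma mem_Lang_of_infix {X : Set (ℤ → A)} {u w : List A} (hw : w ∈ Lang X) (h : u <:+: w) :
    u ∈ Lang X := by
  obtain ⟨x, hx, i, hwi⟩ := hw
  obtain ⟨s, t, rfl⟩ := h
  refine ⟨x, hx, i + s.length, ?_⟩
  have hu : u = ((s ++ u ++ t).drop s.length).take u.length := by simp
  rw [hu, hwi, window_drop_take _ _ (by simp), length_window]

lemma InStar.nil (C : Set (List A)) : InStar C [] := ⟨[], by simp, rfl⟩

lemma InStar.append {C : Set (List A)} {v w : List A} (hv : InStar C v) (hw : InStar C w) :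
    InStar C (v ++ w) := by
  obtain ⟨l₁, h₁, rfl⟩ := hv
  obtain ⟨l₂, h₂, rfl⟩ := hw
  exact ⟨l₁ ++ l₂, fun u hu => (List.mem_append.1 hu).elim (h₁ u) (h₂ u),
    List.flatten_append⟩

lemma nil_mem_FacStar (C : Set (List A)) : [] ∈ FacStar C :=
  ⟨[], InStar.nil C, List.nil_infix⟩

-- Truncated subtraction: words of length at most `M` have empty image.
def blockImage (f : List A → B) (M : ℕ) (w : List A) : List B :=
  List.ofFn fun j : Fin (w.length - M) => f ((w.drop j).take (M + 1))

section blockImage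

variable (f : List A → B) (M : ℕ)

@[simp]
lemma length_blockImage (w : List A) : (blockImage f M w).length = w.length - M := by
  simp [blockImage]

@[simp]
lemma getElem_blockImage (w : List A) (j : ℕ) (hj : j < (blockImage f M w).length) :
    (blockImage f M w)[j] = f ((w.drop j).take (M + 1)) := by
  simp [blockImage]

lemma blockImage_eq_nil {w : List A} (hw : w.length ≤ M) : blockImage f M w = [] := by
  rw [← List.length_eq_zero_iff, length_blockImage]
  omega

lemma blockImage_append_append {p : List A} (hp : p.length = M) (s t : List A) :
    blockImage f M (s ++ p ++ t) = blockImage f M (s ++ p) ++ blockImage f M (p ++ t) := by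
  apply List.ext_getElem (by simp; omega)
  intro j hj _
  simp only [length_blockImage, List.length_append] at hj
  rcases lt_or_ge j s.length with hjs | hjs
  · rw [List.getElem_append_left (by simp; omega)]
    simp only [getElem_blockImage]
    congr 1
    rw [List.drop_append_of_le_length (by simp; omega),
      List.take_append_of_le_length (by simp; omega)]
  · rw [List.getElem_append_right (by simp; omega)]
    simp only [getElem_blockImage, length_blockImage, List.length_append]
    have hj' : j - (s.length + p.length - M) = j - s.length := by omega
    rw [hj', List.append_assoc, List.drop_append, List.drop_eq_nil_of_le hjs, List.nil_append]

lemma blockImage_prefix_blockImage_append (u t : List A) :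
    blockImage f M u <+: blockImage f M (u ++ t) := by
  rw [List.prefix_iff_eq_take]
  apply List.ext_getElem (by simp; omega)
  intro j hj _
  simp only [length_blockImage] at hj
  simp only [List.getElem_take, getElem_blockImage]
  rw [List.drop_append_of_le_length (by omega), List.take_append_of_le_length (by simp; omega)]

lemma blockImage_suffix_blockImage_append (s u : List A) :
    blockImage f M u <:+ blockImage f M (s ++ u) := by
  rw [List.suffix_iff_eq_drop]
  apply List.ext_getElem (by simp; omega)
  intro j hj _
  simp only [length_blockImage] at hj
  simp only [List.getElem_drop, getElem_blockImage, length_blockImage, List.length_append]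
  rw [show s.length + u.length - M - (u.length - M) + j = s.length + j by omega,
    List.drop_length_add_append]

lemma List.IsInfix.blockImage {u w : List A} (h : u <:+: w) :
    _root_.blockImage f M u <:+: _root_.blockImage f M w := by
  obtain ⟨s, t, rfl⟩ := h
  rw [List.append_assoc]
  exact (blockImage_prefix_blockImage_append f M u t).isInfix.trans
    (blockImage_suffix_blockImage_append f M s (u ++ t)).isInfix

end blockImage

lemma blockImage_window (f : List A → B) (m n : ℕ) (x : ℤ → A) (i : ℤ) (l : ℕ) :
    blockImage f (m + n) (window x (i - m) (l + (m + n))) = window (slide f m n x) i l := by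
  apply List.ext_getElem (by simp)
  intro j _ hj
  rw [length_window] at hj
  rw [getElem_blockImage, window_drop_take _ _ (by omega)]
  simp only [window, slide, List.getElem_ofFn]
  rw [sub_add_eq_add_sub]

lemma mem_Lang_slide_image_iff (f : List A → B) (m n : ℕ) (X : Set (ℤ → A)) (w : List B) :
    w ∈ Lang (slide f m n '' X) ↔
      ∃ u ∈ Lang X, m + n ≤ u.length ∧ blockImage f (m + n) u = w := by
  constructor
  · rintro ⟨_, ⟨x, hx, rfl⟩, i, hw⟩
    refine ⟨_, window_mem_Lang hx (i - m) (w.length + (m + n)), by simp, ?_⟩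
    rw [blockImage_window, ← hw]
  · rintro ⟨u, ⟨x, hx, j, hu⟩, hlen, rfl⟩
    refine ⟨slide f m n x, ⟨x, hx, rfl⟩, j + m, ?_⟩
    have hu' : u = window x (j + m - m) (u.length - (m + n) + (m + n)) := by
      rwa [add_sub_cancel_right, Nat.sub_add_cancel hlen]
    nth_rewrite 1 [hu']
    rw [blockImage_window, length_blockImage]

def loopImages (f : List A → B) (M : ℕ) (C : Set (List A)) (p : List A) : Set (List B) :=
  {d | ∃ v, InStar C v ∧ p <:+ p ++ v ∧ blockImage f M (p ++ v) = d}

section loopImages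

variable (f : List A → B) {M : ℕ} (C : Set (List A)) {p : List A}

lemma nil_mem_loopImages (hp : p.length ≤ M) : [] ∈ loopImages f M C p :=
  ⟨[], InStar.nil C, by simp, by simpa using blockImage_eq_nil f M hp⟩

lemma append_mem_loopImages (hp : p.length = M) {d₁ d₂ : List B}
    (h₁ : d₁ ∈ loopImages f M C p) (h₂ : d₂ ∈ loopImages f M C p) :
    d₁ ++ d₂ ∈ loopImages f M C p := by
  obtain ⟨v₁, hv₁, ⟨s, hs⟩, rfl⟩ := h₁
  obtain ⟨v₂, hv₂, hret₂, rfl⟩ := h₂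
  refine ⟨v₁ ++ v₂, hv₁.append hv₂, ?_, ?_⟩
  · rw [← List.append_assoc, ← hs, List.append_assoc]
    exact hret₂.trans (List.suffix_append s _)
  · rw [← List.append_assoc, ← hs, blockImage_append_append f M hp]

lemma flatten_mem_loopImages (hp : p.length = M) {l : List (List B)}
    (hl : ∀ d ∈ l, d ∈ loopImages f M C p) : l.flatten ∈ loopImages f M C p := by
  induction l with
  | nil => exact nil_mem_loopImages f C hp.le
  | cons d l ih =>
    exact append_mem_loopImages f C hp (hl d List.mem_cons_self)
      (ih fun d' hd' => hl d' (List.mem_cons_of_mem d hd'))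

end loopImages

lemma Lang_slide_image_eq_FacStar {X : Set (ℤ → A)} {C : Set (List A)}
    (hcoded : Lang X = FacStar C) (f : List A → B) (m n : ℕ) {z p : List A}
    (hz : InStar C z) (hpz : p <:+ z) (hp : p.length = m + n) :
    Lang (slide f m n '' X) = FacStar (loopImages f (m + n) C p) := by
  ext w
  constructor
  · intro hw
    obtain ⟨u, hu, -, rfl⟩ := (mem_Lang_slide_image_iff f m n X w).1 hw
    rw [hcoded] at hu
    obtain ⟨y, hy, huy⟩ := hu
    have hloop : blockImage f (m + n) (p ++ (y ++ z)) ∈ loopImages f (m + n) C p :=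
      ⟨y ++ z, hy.append hz,
        hpz.trans ((List.suffix_append y z).trans (List.suffix_append p _)), rfl⟩
    refine ⟨_, ⟨[_], by simpa using hloop, List.flatten_singleton⟩, ?_⟩
    exact (huy.trans (List.infix_append' p y z)).blockImage f (m + n)
  · rintro ⟨_, ⟨l, hl, rfl⟩, hw⟩
    obtain ⟨V, hV, -, hflat⟩ := flatten_mem_loopImages f C hp hl
    obtain ⟨t, rfl⟩ := hpz
    have hpV : p ++ V ∈ Lang X := by
      rw [hcoded]
      exact ⟨t ++ (p ++ V), by simpa using hz.append hV, (List.suffix_append t _).isInfix⟩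
    exact mem_Lang_of_infix ((mem_Lang_slide_image_iff f m n X _).2 ⟨_, hpV, by simp [hp], rfl⟩)
      (hflat ▸ hw)

theorem stmt7_general
    (X : Set (ℤ → A))
    (C : Set (List A))
    (hcoded : Lang X = FacStar C)
    (f : List A → B) (m n : ℕ)
    (Y : Set (ℤ → B)) (hY : Y = slide f m n '' X) :
    ∃ D : Set (List B), Lang Y = FacStar D := by
  obtain ⟨x, hx, -⟩ : ([] : List A) ∈ Lang X := hcoded ▸ nil_mem_FacStar C
  obtain ⟨z, hz, hxz⟩ : window x 0 (m + n) ∈ FacStar C :=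
    hcoded ▸ window_mem_Lang hx 0 (m + n)
  have hlen : m + n ≤ z.length := by simpa using hxz.length_le
  exact ⟨_, hY ▸ Lang_slide_image_eq_FacStar hcoded f m n hz
    (List.drop_suffix (z.length - (m + n)) z) (by simp; omega)⟩

/-- a factor of a coded shift is a coded shift: if `X` is a coded
shift and `φ : X → Y` is a surjective sliding block code, then `Y` is coded. -/
theorem stmt7 [Fintype A] [Fintype B]
    [TopologicalSpace A] [DiscreteTopology A]
    (X : Set (ℤ → A)) (hXcl : IsClosed X) (hXinv : shift '' X = X)
    (C : Set (List A)) (hne : ∀ c ∈ C, c ≠ [])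
    (hcoded : Lang X = FacStar C)
    (f : List A → B) (m n : ℕ)
    (Y : Set (ℤ → B)) (hY : Y = slide f m n '' X) :
    ∃ D : Set (List B), Lang Y = FacStar D :=
  stmt7_general X C hcoded f m n Y hY
end

section
/- Let 𝒜 be a finite unambiguous automaton with state set Q. Then 𝒜 is strongly unambiguous if and only if every strongly connected component of the non-diagonal part of the product automaton 𝒜 × 𝒜 is trivial (contains no edge, equivalently no cycle passes through a non-diagonal state). -/
variable {Q A : Type*}

/-- A finite path in the automaton with edge relation `E`, given as a list of
consecutive edges `(source, label, target)`. -/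
def ValidPath (E : Q → A → Q → Prop) (l : List (Q × A × Q)) : Prop :=
  (∀ e ∈ l, E e.1 e.2.1 e.2.2) ∧ l.Chain' (fun e f => e.2.2 = f.1)

/-- The automaton is unambiguous: for every word and every pair of states,
there is at most one path with that label from the first state to the second. -/
def Unambiguous (E : Q → A → Q → Prop) : Prop :=
  ∀ l l' : List (Q × A × Q), ValidPath E l → ValidPath E l' →
    l.map (fun e => e.2.1) = l'.map (fun e => e.2.1) →
    ∀ (h : l ≠ []) (h' : l' ≠ []),
      (l.head h).1 = (l'.head h').1 →
      (l.getLast h).2.2 = (l'.getLast h').2.2 → l = l'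

/-- A bi-infinite path in the automaton with edge relation `E`. -/
def BiPath (E : Q → A → Q → Prop) (z : ℤ → Q × A × Q) : Prop :=
  ∀ n : ℤ, E (z n).1 (z n).2.1 (z n).2.2 ∧ (z n).2.2 = (z (n + 1)).1

/-- The automaton is strongly unambiguous: the labelling of bi-infinite paths
is injective. -/
def StronglyUnambiguous (E : Q → A → Q → Prop) : Prop :=
  ∀ z z' : ℤ → Q × A × Q, BiPath E z → BiPath E z' →
    (∀ n, (z n).2.1 = (z' n).2.1) → z = z'

/-- The non-diagonal part of the square automaton `𝒜 × 𝒜`. -/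
def SquareND (E : Q → A → Q → Prop) : Q × Q → A → Q × Q → Prop :=
  fun p a r => p.1 ≠ p.2 ∧ r.1 ≠ r.2 ∧ E p.1 a r.1 ∧ E p.2 a r.2

/-! A cycle in the non-diagonal part of `𝒜 × 𝒜` unrolls periodically into two bi-infinite
paths with the same label that differ everywhere. Conversely, take two bi-infinite paths with
the same label. If the non-diagonal square has no cycle, the pair of their states cannot stay
off the diagonal for `|Q|² + 1` consecutive positions (pigeonhole), so every position lies
between two positions where the paths are in the same state; by unambiguity the two finite
paths in between coincide. -/

lemma Int.exists_lt_map_eq_of_Icc {β : Type*} [Fintype β] (f : ℤ → β) (a : ℤ) :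
    ∃ i j, a ≤ i ∧ i < j ∧ j ≤ a + Fintype.card β ∧ f i = f j := by
  obtain ⟨x, hx, y, hy, hxy, hf⟩ :=
    Finset.exists_ne_map_eq_of_card_lt_of_maps_to (s := Finset.Icc a (a + Fintype.card β))
      (t := Finset.univ) (f := f) (by simp; omega) (fun _ _ => Finset.mem_coe.2 (Finset.mem_univ _))
  simp only [Finset.mem_Icc] at hx hy
  rcases hxy.lt_or_gt with h | h
  · exact ⟨x, y, hx.1, h, hy.2, hf⟩
  · exact ⟨y, x, hy.1, h, hx.2, hf.symm⟩

lemma Int.toNat_emod_add_one (n : ℤ) {k : ℕ} (hk : 0 < k) :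
    ((n + 1) % k).toNat = ((n % k).toNat + 1) % k := by
  have h0 : 0 ≤ n % k := Int.emod_nonneg n (by exact_mod_cast hk.ne')
  have : (n + 1) % k = (((n % k).toNat + 1 : ℕ) : ℤ) % k := by
    rw [Nat.cast_succ, Int.toNat_of_nonneg h0, Int.emod_add_emod]
  rw [this, ← Int.natCast_emod, Int.toNat_natCast]

section IntSegment

variable {α : Type*}

def intSegment (f : ℤ → α) (m : ℤ) (len : ℕ) : List α :=
  (List.range len).map fun i : ℕ => f (m + (i : ℤ))

@[simp]
lemma length_intSegment (f : ℤ → α) (m : ℤ) (len : ℕ) :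
    (intSegment f m len).length = len := by
  simp [intSegment]

@[simp]
lemma getElem_intSegment (f : ℤ → α) (m : ℤ) (len i : ℕ)
    (h : i < (intSegment f m len).length) :
    (intSegment f m len)[i] = f (m + i) := by
  simp only [intSegment, List.getElem_map, List.getElem_range]

lemma intSegment_ne_nil (f : ℤ → α) (m : ℤ) {len : ℕ} (h : 0 < len) :
    intSegment f m len ≠ [] := by
  simp only [intSegment, ne_eq, List.map_eq_nil_iff, List.range_eq_nil]
  omega

lemma head_intSegment (f : ℤ → α) (m : ℤ) (len : ℕ) (h : intSegment f m len ≠ []) :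
    (intSegment f m len).head h = f m := by
  simp [List.head_eq_getElem]

lemma getLast_intSegment (f : ℤ → α) (m : ℤ) (len : ℕ) (h : intSegment f m len ≠ []) :
    (intSegment f m len).getLast h = f (m + len - 1) := by
  have hlen : 0 < len := by simpa [← List.length_pos_iff] using h
  simp only [List.getLast_eq_getElem, getElem_intSegment, length_intSegment]
  congr 1
  omega

end IntSegment

def HasCycle (E : Q → A → Q → Prop) : Prop :=
  ∃ (l : List (Q × A × Q)) (h : l ≠ []), ValidPath E l ∧ (l.getLast h).2.2 = (l.head h).1

variable {E : Q → A → Q → Prop}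

lemma validPath_intSegment {z : ℤ → Q × A × Q} {m : ℤ} {len : ℕ}
    (hz : ∀ k, m ≤ k → k < m + len →
      E (z k).1 (z k).2.1 (z k).2.2 ∧ (z k).2.2 = (z (k + 1)).1) :
    ValidPath E (intSegment z m len) := by
  constructor
  · intro e he
    obtain ⟨i, hi, rfl⟩ := List.mem_map.1 he
    have hi := List.mem_range.1 hi
    exact (hz _ (by omega) (by omega)).1
  · rw [List.Chain', List.isChain_iff_getElem]
    intro i hi
    simp only [getElem_intSegment, length_intSegment] at hi ⊢
    rw [Nat.cast_succ, ← add_assoc]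
    exact (hz _ (by omega) (by omega)).2

lemma HasCycle.exists_biPath (h : HasCycle E) : ∃ z, BiPath E z := by
  obtain ⟨l, hne, hl, hcyc⟩ := h
  have hk : 0 < l.length := List.length_pos_iff.2 hne
  have hidx (n : ℤ) : (n % l.length).toNat < l.length := by
    have := Int.emod_lt_of_pos n (by exact_mod_cast hk : (0 : ℤ) < l.length)
    omega
  have hglue (i j : ℕ) (hi : i < l.length) (hj : j < l.length) (hij : j = (i + 1) % l.length) :
      l[i].2.2 = l[j].1 := by
    subst hij
    rcases (Nat.succ_le_of_lt hi).lt_or_eq with hlt | hlast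
    · simp only [Nat.mod_eq_of_lt hlt]
      exact List.isChain_iff_getElem.1 hl.2 i hlt
    · obtain rfl : i = l.length - 1 := by omega
      simp only [Nat.sub_add_cancel hk, Nat.mod_self]
      rw [← List.getLast_eq_getElem hne, ← List.head_eq_getElem hne]
      exact hcyc
  exact ⟨fun n => l[(n % l.length).toNat]'(hidx n), fun n =>
    ⟨hl.1 _ (List.getElem_mem _), hglue _ _ _ _ (Int.toNat_emod_add_one n hk)⟩⟩

lemma not_stronglyUnambiguous_of_hasCycle (h : HasCycle (SquareND E)) :
    ¬ StronglyUnambiguous E := by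
  intro hSU
  obtain ⟨z, hz⟩ := h.exists_biPath
  have hproj := hSU (fun n => ((z n).1.1, (z n).2.1, (z n).2.2.1))
    (fun n => ((z n).1.2, (z n).2.1, (z n).2.2.2))
    (fun n => ⟨(hz n).1.2.2.1, congrArg Prod.fst (hz n).2⟩)
    (fun n => ⟨(hz n).1.2.2.2, congrArg Prod.snd (hz n).2⟩) fun _ => rfl
  exact (hz 0).1.1 (congrArg (fun w => (w 0).1) hproj)

section PairOfBiPaths

variable {z z' : ℤ → Q × A × Q}

def pairPath (z z' : ℤ → Q × A × Q) (n : ℤ) : (Q × Q) × A × (Q × Q) :=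
  (((z n).1, (z' n).1), (z n).2.1, ((z n).2.2, (z' n).2.2))

lemma hasCycle_of_source_ne_of_source_repeat (hz : BiPath E z) (hz' : BiPath E z')
    (hlab : ∀ n, (z n).2.1 = (z' n).2.1) {a b : ℤ} (hab : a < b)
    (hne : ∀ k, a ≤ k → k ≤ b → (z k).1 ≠ (z' k).1)
    (hrep : ((z a).1, (z' a).1) = ((z b).1, (z' b).1)) : HasCycle (SquareND E) := by
  have hlen : 0 < (b - a).toNat := by omega
  refine ⟨intSegment (pairPath z z') a (b - a).toNat, intSegment_ne_nil _ _ hlen,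
    validPath_intSegment fun k hak hkb => ?_, ?_⟩
  · have hkb : k < b := by omega
    refine ⟨⟨hne k hak hkb.le, ?_, (hz k).1, ?_⟩, ?_⟩ <;> dsimp only [pairPath]
    · rw [(hz k).2, (hz' k).2]
      exact hne (k + 1) (by omega) (by omega)
    · rw [hlab k]
      exact (hz' k).1
    · rw [(hz k).2, (hz' k).2]
  · rw [getLast_intSegment, head_intSegment]
    show ((z _).2.2, (z' _).2.2) = ((z a).1, (z' a).1)
    rw [(hz _).2, (hz' _).2, show a + ((b - a).toNat : ℤ) - 1 + 1 = b by omega, hrep]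

lemma exists_source_eq_of_not_hasCycle [Fintype Q] (hNC : ¬ HasCycle (SquareND E))
    (hz : BiPath E z) (hz' : BiPath E z') (hlab : ∀ n, (z n).2.1 = (z' n).2.1) (a : ℤ) :
    ∃ k, a ≤ k ∧ k ≤ a + Fintype.card (Q × Q) ∧ (z k).1 = (z' k).1 := by
  by_contra! hD
  obtain ⟨i, j, hai, hij, hja, hrep⟩ :=
    Int.exists_lt_map_eq_of_Icc (fun k => ((z k).1, (z' k).1)) a
  exact hNC (hasCycle_of_source_ne_of_source_repeat hz hz' hlab hij
    (fun k hik hkj => hD k (by omega) (by omega)) hrep)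

lemma eq_of_source_eq_at_ends (hU : Unambiguous E) (hz : BiPath E z) (hz' : BiPath E z')
    (hlab : ∀ n, (z n).2.1 = (z' n).2.1) {m k : ℤ} (hm : (z m).1 = (z' m).1)
    (hk : (z k).1 = (z' k).1) {n : ℤ} (hmn : m ≤ n) (hnk : n < k) : z n = z' n := by
  have hlen : 0 < (k - m).toNat := by omega
  have hseg := hU (intSegment z m (k - m).toNat) (intSegment z' m (k - m).toNat)
    (validPath_intSegment fun j _ _ => hz j) (validPath_intSegment fun j _ _ => hz' j)
    (by simp [intSegment, hlab]) (intSegment_ne_nil _ _ hlen) (intSegment_ne_nil _ _ hlen)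
    (by rwa [head_intSegment, head_intSegment])
    (by rwa [getLast_intSegment, getLast_intSegment, (hz _).2, (hz' _).2,
      show m + ((k - m).toNat : ℤ) - 1 + 1 = k by omega])
  have hn := List.getElem_of_eq hseg (i := (n - m).toNat) (by simp; omega)
  simp only [getElem_intSegment, show m + ((n - m).toNat : ℤ) = n by omega] at hn
  exact hn

end PairOfBiPaths

theorem stmt8_general [Fintype Q] (E : Q → A → Q → Prop)
    (hU : Unambiguous E) :
    StronglyUnambiguous E ↔
      ¬ ∃ (l : List ((Q × Q) × A × (Q × Q))) (h : l ≠ []),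
          ValidPath (SquareND E) l ∧ (l.getLast h).2.2 = (l.head h).1 := by
  refine ⟨fun hSU hcyc => not_stronglyUnambiguous_of_hasCycle hcyc hSU,
    fun hNC z z' hz hz' hlab => ?_⟩
  have hsrc (n : ℤ) : (z n).1 = (z' n).1 := by
    obtain ⟨m, -, hmn, hm⟩ :=
      exists_source_eq_of_not_hasCycle hNC hz hz' hlab (n - Fintype.card (Q × Q))
    obtain ⟨k, hnk, -, hk⟩ := exists_source_eq_of_not_hasCycle hNC hz hz' hlab n
    rcases hnk.eq_or_lt with rfl | hnk
    · exact hk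
    · exact congrArg Prod.fst (eq_of_source_eq_at_ends hU hz hz' hlab hm hk (by omega) hnk)
  funext n
  exact Prod.ext (hsrc n) (Prod.ext (hlab n) (by rw [(hz n).2, (hz' n).2, hsrc]))

/-- a finite unambiguous automaton is strongly unambiguous iff
every strongly connected component of the non-diagonal part of its square is
trivial, i.e. iff the non-diagonal part of the square carries no nonempty
cycle. -/
theorem stmt8 [Fintype Q] [Fintype A] (E : Q → A → Q → Prop)
    (hU : Unambiguous E) :
    StronglyUnambiguous E ↔
      ¬ ∃ (l : List ((Q × Q) × A × (Q × Q))) (h : l ≠ []),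
          ValidPath (SquareND E) l ∧ (l.getLast h).2.2 = (l.head h).1 :=
  stmt8_general E hU
end

section
/- Let L ⊆ A* be factorial. A word w is a constant for L if and only if for all u, v ∈ A*, uw ∈ L and wv ∈ L imply uwv ∈ L. -/
theorem List.append_mem_and_append_mem_of_infixClosed {α : Type*} {L : Set (List α)}
    (hfact : ∀ u ∈ L, ∀ v : List α, v <:+: u → v ∈ L) {u w v : List α}
    (h : u ++ w ++ v ∈ L) : u ++ w ∈ L ∧ w ++ v ∈ L :=
  ⟨hfact _ h _ ⟨[], v, by simp⟩, hfact _ h _ ⟨u, [], by simp⟩⟩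

theorem stmt10_general {A : Type*} (L : Set (List A))
    (hfact : ∀ u ∈ L, ∀ v : List A, v <:+: u → v ∈ L)
    (w : List A) :
    (∀ u v u' v' : List A, u ++ w ++ v ∈ L → u' ++ w ++ v' ∈ L →
        u ++ w ++ v' ∈ L ∧ u' ++ w ++ v ∈ L) ↔
    (∀ u v : List A, u ++ w ∈ L → w ++ v ∈ L → u ++ w ++ v ∈ L) := by
  constructor
  · intro hconst u v hu hv
    exact (hconst u [] [] v (by simpa using hu) (by simpa using hv)).1
  · intro hglue u v u' v' h h'
    obtain ⟨huw, hwv⟩ := List.append_mem_and_append_mem_of_infixClosed hfact h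
    obtain ⟨hu'w, hwv'⟩ := List.append_mem_and_append_mem_of_infixClosed hfact h'
    exact ⟨hglue u v' huw hwv', hglue u' v hu'w hwv⟩

/-- if `L` is factorial, then a word `w` (which is a factor of
some element of `L`) is a constant for `L` iff for all `u, v`, `uw ∈ L` and
`wv ∈ L` imply `uwv ∈ L`. -/
theorem stmt10 {A : Type*} [Fintype A] (L : Set (List A))
    (hfact : ∀ u ∈ L, ∀ v : List A, v <:+: u → v ∈ L)
    (w : List A) (hw : ∃ z ∈ L, w <:+: z) :
    (∀ u v u' v' : List A, u ++ w ++ v ∈ L → u' ++ w ++ v' ∈ L →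
        u ++ w ++ v' ∈ L ∧ u' ++ w ++ v ∈ L) ↔
    (∀ u v : List A, u ++ w ∈ L → w ++ v ∈ L → u ++ w ++ v ∈ L) :=
  stmt10_general L hfact w
end
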